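/- Let F = F(N,D) be a connected GSC, x ∈ F, n ≥ 1, and ω, τ ∈ D^n \ Ω_n(x) two words that are well separated by x. Then φ_ω(F) and φ_τ(F) lie in different connected components of F \ {x}; in particular, x is a cut point of F. -/

import Mathlib

open Set Topology

noncomputable def phi (N : ℕ) (i : ℕ × ℕ) (p : ℝ × ℝ) : ℝ × ℝ :=
  ((p.1 + (i.1 : ℝ)) / (N : ℝ), (p.2 + (i.2 : ℝ)) / (N : ℝ))

noncomputable def phiW (N : ℕ) (l : List (ℕ × ℕ)) : ℝ × ℝ → ℝ × ℝ :=
  l.foldr (fun i g => phi N i ∘ g) id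

def Words (D : Finset (ℕ × ℕ)) (k : ℕ) : Set (List (ℕ × ℕ)) :=
  {l | l.length = k ∧ ∀ a ∈ l, a ∈ D}

def GoodDigits (N : ℕ) (D : Finset (ℕ × ℕ)) : Prop :=
  2 ≤ N ∧ (∀ i ∈ D, i.1 < N ∧ i.2 < N) ∧ 1 < D.card ∧ D.card < N ^ 2

def IsAttractor (N : ℕ) (D : Finset (ℕ × ℕ)) (F : Set (ℝ × ℝ)) : Prop :=
  F.Nonempty ∧ IsCompact F ∧ F = ⋃ i ∈ D, phi N i '' F

def OmegaW (N : ℕ) (D : Finset (ℕ × ℕ)) (F : Set (ℝ × ℝ)) (x : ℝ × ℝ) (k : ℕ) :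
    Set (List (ℕ × ℕ)) :=
  {l | l ∈ Words D k ∧ x ∈ phiW N l '' F}

def Ek (N : ℕ) (D : Finset (ℕ × ℕ)) (F : Set (ℝ × ℝ)) (x : ℝ × ℝ) (k : ℕ) :
    Set (ℝ × ℝ) :=
  ⋃ l ∈ Words D k \ OmegaW N D F x k, phiW N l '' F

def IsRep (N : ℕ) (D : Finset (ℕ × ℕ)) (F : Set (ℝ × ℝ)) (x : ℝ × ℝ)
    (ii : ℕ → ℕ × ℕ) : Prop :=
  (∀ k, ii k ∈ D) ∧ ∀ k : ℕ, x ∈ phiW N (List.ofFn fun j : Fin k => ii (j : ℕ)) '' F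

def SepComp (E A B : Set (ℝ × ℝ)) : Prop :=
  A ⊆ E ∧ B ⊆ E ∧
    ∀ y ∈ A, ∀ z ∈ B, connectedComponentIn E y ≠ connectedComponentIn E z

def WellSep (N : ℕ) (D : Finset (ℕ × ℕ)) (F : Set (ℝ × ℝ)) (x : ℝ × ℝ) (n : ℕ)
    (ω τ : List (ℕ × ℕ)) : Prop :=
  ∀ p : ℕ, 1 ≤ p → SepComp (Ek N D F x (n + p)) (phiW N ω '' F) (phiW N τ '' F)

section AuxLemmas

open Metric

variable {N : ℕ} {D : Finset (ℕ × ℕ)} {F : Set (ℝ × ℝ)} {x : ℝ × ℝ}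

lemma phi_continuous (N : ℕ) (i : ℕ × ℕ) : Continuous (phi N i) := by
  unfold phi
  fun_prop

lemma phiW_cons (N : ℕ) (i : ℕ × ℕ) (l : List (ℕ × ℕ)) :
    phiW N (i :: l) = phi N i ∘ phiW N l := rfl

lemma phiW_continuous (N : ℕ) (l : List (ℕ × ℕ)) : Continuous (phiW N l) := by
  induction l with
  | nil => exact continuous_id
  | cons i l ih => rw [phiW_cons]; exact (phi_continuous N i).comp ih

lemma phiW_append (N : ℕ) (l m : List (ℕ × ℕ)) :
    phiW N (l ++ m) = phiW N l ∘ phiW N m := by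
  induction l with
  | nil => rfl
  | cons i l ih =>
      show phiW N (i :: (l ++ m)) = _
      rw [phiW_cons, ih, phiW_cons, Function.comp_assoc]

lemma dist_phi (hN : 0 < (N : ℝ)) (i : ℕ × ℕ) (p q : ℝ × ℝ) :
    dist (phi N i p) (phi N i q) = dist p q / N := by
  simp only [phi, Prod.dist_eq, Real.dist_eq]
  have h1 : (p.1 + (i.1:ℝ)) / N - (q.1 + (i.1:ℝ)) / N = (p.1 - q.1) / N := by ring
  have h2 : (p.2 + (i.2:ℝ)) / N - (q.2 + (i.2:ℝ)) / N = (p.2 - q.2) / N := by ring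
  rw [h1, h2, abs_div, abs_div, abs_of_pos hN, max_div_div_right hN.le]

lemma dist_phiW (hN : 0 < (N : ℝ)) (l : List (ℕ × ℕ)) (p q : ℝ × ℝ) :
    dist (phiW N l p) (phiW N l q) = dist p q / N ^ l.length := by
  induction l with
  | nil => simp [phiW]
  | cons i l ih =>
      rw [phiW_cons]
      show dist (phi N i (phiW N l p)) (phi N i (phiW N l q)) = _
      rw [dist_phi hN, ih, div_div, List.length_cons, pow_succ]

lemma cell_subset_F (hF : IsAttractor N D F) :
    ∀ l : List (ℕ × ℕ), (∀ a ∈ l, a ∈ D) → phiW N l '' F ⊆ F := by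
  intro l
  induction l with
  | nil => intro _; simp [phiW]
  | cons i l ih =>
      intro hmem
      rw [phiW_cons, Set.image_comp]
      have h1 : phiW N l '' F ⊆ F := ih (fun a ha => hmem a (List.mem_cons_of_mem _ ha))
      refine (Set.image_mono h1).trans ?_
      have h2 : phi N i '' F ⊆ ⋃ j ∈ D, phi N j '' F := by
        intro y hy
        simp only [Set.mem_iUnion]
        exact ⟨i, hmem i List.mem_cons_self, hy⟩
      rw [← hF.2.2] at h2
      exact h2

lemma cover_words (hF : IsAttractor N D F) :
    ∀ k : ℕ, ∀ w ∈ F, ∃ l ∈ Words D k, w ∈ phiW N l '' F := by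
  intro k
  induction k with
  | zero =>
      intro w hw
      exact ⟨[], ⟨rfl, by simp⟩, by simpa [phiW] using hw⟩
  | succ k ih =>
      intro w hw
      have hw' : w ∈ ⋃ j ∈ D, phi N j '' F := by rw [← hF.2.2]; exact hw
      simp only [Set.mem_iUnion] at hw'
      obtain ⟨i, hiD, v, hvF, hvw⟩ := hw'
      obtain ⟨l, hl, u, huF, hul⟩ := ih v hvF
      refine ⟨i :: l, ⟨by simp [hl.1], ?_⟩, ?_⟩
      · intro a ha
        rcases List.mem_cons.1 ha with h | h
        · exact h ▸ hiD
        · exact hl.2 a h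
      · exact ⟨u, huF, by rw [phiW_cons]; show phi N i (phiW N l u) = w; rw [hul, hvw]⟩

lemma words_finite (D : Finset (ℕ × ℕ)) : ∀ k : ℕ, (Words D k).Finite := by
  intro k
  induction k with
  | zero =>
      refine Set.Finite.subset (Set.finite_singleton ([] : List (ℕ × ℕ))) ?_
      intro l hl
      have h := hl.1
      rw [List.length_eq_zero_iff] at h
      simp [h]
  | succ k ih =>
      refine Set.Finite.subset
        (((D.finite_toSet.prod ih).image
          (fun p : (ℕ × ℕ) × List (ℕ × ℕ) => p.1 :: p.2))) ?_
      rintro l hl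
      cases l with
      | nil => exact absurd hl.1 (by simp)
      | cons a t =>
          refine ⟨(a, t), ⟨?_, ?_, ?_⟩, rfl⟩
          · exact hl.2 a List.mem_cons_self
          · have : t.length = k := by have := hl.1; simpa using this
            exact this
          · exact fun b hb => hl.2 b (List.mem_cons_of_mem _ hb)

lemma Ek_subset_diff (hF : IsAttractor N D F) (k : ℕ) :
    Ek N D F x k ⊆ F \ {x} := by
  intro u hu
  simp only [Ek, Set.mem_iUnion, Set.mem_diff] at hu
  obtain ⟨l, hl, hul⟩ := hu
  constructor
  · exact cell_subset_F hF l hl.1.2 hul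
  · intro hux
    rw [Set.mem_singleton_iff] at hux
    exact hl.2 ⟨hl.1, by rw [← hux]; exact hul⟩

lemma Ek_mono (hF : IsAttractor N D F) :
    ∀ {a b : ℕ}, a ≤ b → Ek N D F x a ⊆ Ek N D F x b := by
  have step : ∀ k : ℕ, Ek N D F x k ⊆ Ek N D F x (k + 1) := by
    intro k u hu
    simp only [Ek, Set.mem_iUnion, Set.mem_diff] at hu ⊢
    obtain ⟨l, hl, hul⟩ := hu
    obtain ⟨v, hvF, hvu⟩ := hul
    have hvF' : v ∈ ⋃ j ∈ D, phi N j '' F := by rw [← hF.2.2]; exact hvF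
    simp only [Set.mem_iUnion] at hvF'
    obtain ⟨i, hiD, a, haF, hav⟩ := hvF'
    have hsub : phiW N (l ++ [i]) '' F ⊆ phiW N l '' F := by
      rw [phiW_append, Set.image_comp]
      refine Set.image_mono ?_
      have : phiW N [i] '' F = phi N i '' F := by
        congr 1
      rw [this]
      intro y ⟨b, hbF, hby⟩
      have : phi N i '' F ⊆ F := by
        have h2 : phi N i '' F ⊆ ⋃ j ∈ D, phi N j '' F := by
          intro y hy
          simp only [Set.mem_iUnion]
          exact ⟨i, hiD, hy⟩
        rw [← hF.2.2] at h2
        exact h2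
      exact this ⟨b, hbF, hby⟩
    have hmem : u ∈ phiW N (l ++ [i]) '' F := by
      rw [phiW_append]
      refine ⟨a, haF, ?_⟩
      show phiW N l (phiW N [i] a) = u
      have h1 : phiW N [i] a = phi N i a := rfl
      rw [h1, hav, hvu]
    have hwords : (l ++ [i]) ∈ Words D (k + 1) := by
      refine ⟨by simp [hl.1.1], ?_⟩
      intro b hb
      rcases List.mem_append.1 hb with h | h
      · exact hl.1.2 b h
      · rw [List.mem_singleton] at h; exact h ▸ hiD
    refine ⟨l ++ [i], ⟨hwords, ?_⟩, hmem⟩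
    intro hΩ
    exact hl.2 ⟨hl.1, hsub hΩ.2⟩
  intro a b hab
  induction b, hab using Nat.le_induction with
  | base => exact subset_rfl
  | succ b _ ih => exact ih.trans (step b)

lemma nbhd_cell (hF : IsAttractor N D F) (k : ℕ) {w : ℝ × ℝ} (hw : w ∈ F) :
    ∃ δ > 0, ∀ u ∈ F, dist u w < δ →
      ∃ l ∈ Words D k, w ∈ phiW N l '' F ∧ u ∈ phiW N l '' F := by
  classical
  set T : Set (List (ℕ × ℕ)) := {l ∈ Words D k | w ∉ phiW N l '' F} with hT
  have hTfin : T.Finite := (words_finite D k).subset (fun l hl => hl.1)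
  have hKclosed : IsClosed (⋃ l ∈ T, phiW N l '' F) :=
    Set.Finite.isClosed_biUnion hTfin
      (fun l _ => (hF.2.1.image (phiW_continuous N l)).isClosed)
  have hwK : w ∉ ⋃ l ∈ T, phiW N l '' F := by
    simp only [Set.mem_iUnion, not_exists]
    rintro l ⟨_, hl2⟩ hwl
    exact hl2 hwl
  have hopen : IsOpen (⋃ l ∈ T, phiW N l '' F)ᶜ := hKclosed.isOpen_compl
  obtain ⟨δ, hδpos, hball⟩ := Metric.isOpen_iff.1 hopen w hwK
  refine ⟨δ, hδpos, ?_⟩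
  intro u huF hdist
  obtain ⟨l, hl, hul⟩ := cover_words hF k u huF
  refine ⟨l, hl, ?_, hul⟩
  by_contra hwl
  have : u ∈ ⋃ l ∈ T, phiW N l '' F := by
    exact Set.mem_biUnion ⟨hl, hwl⟩ hul
  exact (hball (Metric.mem_ball.2 hdist)) this

end AuxLemmas

theorem stmt8 (N : ℕ) (D : Finset (ℕ × ℕ)) (hND : GoodDigits N D)
    (F : Set (ℝ × ℝ)) (hF : IsAttractor N D F) (hFconn : IsConnected F)
    (x : ℝ × ℝ) (hx : x ∈ F) (n : ℕ) (hn : 1 ≤ n)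
    (ω τ : List (ℕ × ℕ))
    (hω : ω ∈ Words D n \ OmegaW N D F x n)
    (hτ : τ ∈ Words D n \ OmegaW N D F x n)
    (hsep : WellSep N D F x n ω τ) :
    SepComp (F \ {x}) (phiW N ω '' F) (phiW N τ '' F) ∧
      ¬ IsPreconnected (F \ {x}) := by
  classical
  have hN2 : (2:ℝ) ≤ (N:ℝ) := by exact_mod_cast hND.1
  have hN0 : (0:ℝ) < (N:ℝ) := by linarith
  have hN1 : (1:ℝ) < (N:ℝ) := by linarith
  obtain ⟨C, hC⟩ := Metric.isBounded_iff.1 hF.2.1.isBounded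
  -- diameters of cells
  have cell_small : ∀ (k : ℕ) (l : List (ℕ × ℕ)), l ∈ Words D k →
      ∀ a b : ℝ × ℝ, a ∈ phiW N l '' F → b ∈ phiW N l '' F →
        dist a b ≤ C / N ^ k := by
    rintro k l hl a b ⟨a', ha', rfl⟩ ⟨b', hb', rfl⟩
    rw [dist_phiW hN0, hl.1]
    have hpow : (0:ℝ) < (N:ℝ) ^ k := by positivity
    have hab := hC ha' hb'
    gcongr
  -- conversions of hsep facts to the `n + 1 + m` indexing
  have hωE : ∀ m : ℕ, phiW N ω '' F ⊆ Ek N D F x (n + 1 + m) := by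
    intro m
    have h := (hsep (1 + m) (by omega)).1
    rwa [show n + (1 + m) = n + 1 + m by omega] at h
  have hτE : ∀ m : ℕ, phiW N τ '' F ⊆ Ek N D F x (n + 1 + m) := by
    intro m
    have h := (hsep (1 + m) (by omega)).2.1
    rwa [show n + (1 + m) = n + 1 + m by omega] at h
  have hneq : ∀ m : ℕ, ∀ y' ∈ phiW N ω '' F, ∀ z' ∈ phiW N τ '' F,
      connectedComponentIn (Ek N D F x (n + 1 + m)) y' ≠
        connectedComponentIn (Ek N D F x (n + 1 + m)) z' := by
    intro m
    have h := (hsep (1 + m) (by omega)).2.2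
    rwa [show n + (1 + m) = n + 1 + m by omega] at h
  -- the key local claim
  have key : ∀ w : ℝ × ℝ, ∃ δ : ℝ, ∃ m : ℕ, 0 < δ ∧
      (w ∈ F \ {x} → ∀ u ∈ F, dist u w < δ →
        u ∈ connectedComponentIn (Ek N D F x (n + 1 + m)) w) := by
    intro w
    by_cases hw : w ∈ F \ {x}
    · have hd : 0 < dist w x := dist_pos.2 (fun h => hw.2 (by simp [h]))
      obtain ⟨m0, hm0⟩ := pow_unbounded_of_one_lt (C / dist w x) hN1
      have hCd : C / (N:ℝ) ^ (n + 1 + m0) < dist w x := by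
        have h1 : C < (N:ℝ) ^ m0 * dist w x := by
          rwa [div_lt_iff₀ hd] at hm0
        have h2 : (N:ℝ) ^ m0 ≤ (N:ℝ) ^ (n + 1 + m0) :=
          pow_le_pow_right₀ (by linarith) (by omega)
        have hpow : (0:ℝ) < (N:ℝ) ^ (n + 1 + m0) := by positivity
        rw [div_lt_iff₀ hpow]
        nlinarith
      obtain ⟨δ, hδpos, hδ⟩ := nbhd_cell hF (n + 1 + m0) hw.1
      refine ⟨δ, m0, hδpos, fun _ u huF hdist => ?_⟩
      obtain ⟨l, hl, hwl, hul⟩ := hδ u huF hdist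
      have hxl : x ∉ phiW N l '' F := by
        intro hxl
        exact absurd (cell_small _ l hl w x hwl hxl) (not_le.2 hCd)
      have hcell_sub : phiW N l '' F ⊆ Ek N D F x (n + 1 + m0) := by
        intro y hy
        simp only [Ek, Set.mem_iUnion]
        exact ⟨l, ⟨hl, fun hΩ => hxl hΩ.2⟩, hy⟩
      have hpre : IsPreconnected (phiW N l '' F) :=
        hFconn.isPreconnected.image _ (phiW_continuous N l).continuousOn
      exact hpre.subset_connectedComponentIn hwl hcell_sub hul
    · exact ⟨1, 0, one_pos, fun h => absurd h hw⟩
  choose δ m hδpos hkey using key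
  -- base point in φ_ω(F)
  obtain ⟨y0, hy0⟩ : (phiW N ω '' F).Nonempty := hF.1.image _
  obtain ⟨z0, hz0⟩ : (phiW N τ '' F).Nonempty := hF.1.image _
  set V : Set (ℝ × ℝ) :=
    ⋃ q : ℕ, connectedComponentIn (Ek N D F x (n + 1 + q)) y0 with hV
  have hωpre : IsPreconnected (phiW N ω '' F) :=
    hFconn.isPreconnected.image _ (phiW_continuous N ω).continuousOn
  have hωV : phiW N ω '' F ⊆ V := by
    intro y' hy'
    exact Set.mem_iUnion.2 ⟨0, hωpre.subset_connectedComponentIn hy0 (hωE 0) hy'⟩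
  have hVsub : V ⊆ F \ {x} := by
    intro v hv
    obtain ⟨q, hq⟩ := Set.mem_iUnion.1 hv
    exact Ek_subset_diff hF _ (connectedComponentIn_subset _ _ hq)
  have hτV : ∀ z' ∈ phiW N τ '' F, z' ∉ V := by
    intro z' hz' hmem
    obtain ⟨q, hq⟩ := Set.mem_iUnion.1 hmem
    exact hneq q y0 hy0 z' hz' (connectedComponentIn_eq hq)
  -- component monotonicity helper
  have compmono : ∀ (a b : ℕ), a ≤ b → ∀ v : ℝ × ℝ,
      connectedComponentIn (Ek N D F x (n + 1 + a)) v ⊆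
        connectedComponentIn (Ek N D F x (n + 1 + b)) v := by
    intro a b hab v
    exact connectedComponentIn_mono v (Ek_mono hF (by omega))
  -- absorption into V
  have habsV : ∀ w ∈ V, ∀ u ∈ F, dist u w < δ w → u ∈ V := by
    intro w hwV u huF hdist
    obtain ⟨q, hq⟩ := Set.mem_iUnion.1 hwV
    have hu : u ∈ connectedComponentIn (Ek N D F x (n + 1 + m w)) w :=
      hkey w (hVsub hwV) u huF hdist
    set r := max q (m w) with hr
    have hu' : u ∈ connectedComponentIn (Ek N D F x (n + 1 + r)) w :=
      compmono _ _ (le_max_right _ _) w hu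
    have hw' : w ∈ connectedComponentIn (Ek N D F x (n + 1 + r)) y0 :=
      compmono _ _ (le_max_left _ _) y0 hq
    refine Set.mem_iUnion.2 ⟨r, ?_⟩
    rw [connectedComponentIn_eq hw']
    exact hu'
  have habsW : ∀ w ∈ (F \ {x}) \ V, ∀ u ∈ F, dist u w < δ w → u ∉ V := by
    intro w hw u huF hdist huV
    obtain ⟨q, hq⟩ := Set.mem_iUnion.1 huV
    have hu : u ∈ connectedComponentIn (Ek N D F x (n + 1 + m w)) w :=
      hkey w hw.1 u huF hdist
    set r := max q (m w) with hr
    have hu1 : u ∈ connectedComponentIn (Ek N D F x (n + 1 + r)) w :=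
      compmono _ _ (le_max_right _ _) w hu
    have hu2 : u ∈ connectedComponentIn (Ek N D F x (n + 1 + r)) y0 :=
      compmono _ _ (le_max_left _ _) y0 hq
    have heq : connectedComponentIn (Ek N D F x (n + 1 + r)) w =
        connectedComponentIn (Ek N D F x (n + 1 + r)) y0 :=
      (connectedComponentIn_eq hu1).trans (connectedComponentIn_eq hu2).symm
    have hwE : w ∈ Ek N D F x (n + 1 + r) :=
      connectedComponentIn_nonempty_iff.1 ⟨u, hu1⟩
    have hwV : w ∈ V := by
      refine Set.mem_iUnion.2 ⟨r, ?_⟩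
      rw [← heq]
      exact mem_connectedComponentIn hwE
    exact hw.2 hwV
  -- the two open sets
  set G : Set (ℝ × ℝ) := ⋃ w ∈ V, Metric.ball w (δ w) with hG
  set H : Set (ℝ × ℝ) := ⋃ w ∈ (F \ {x}) \ V, Metric.ball w (δ w) with hH
  have hGopen : IsOpen G := isOpen_biUnion (fun _ _ => Metric.isOpen_ball)
  have hHopen : IsOpen H := isOpen_biUnion (fun _ _ => Metric.isOpen_ball)
  have hcover : F \ {x} ⊆ G ∪ H := by
    intro w hw
    by_cases hwV : w ∈ V
    · exact Or.inl (Set.mem_biUnion hwV (Metric.mem_ball_self (hδpos w)))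
    · exact Or.inr (Set.mem_biUnion ⟨hw, hwV⟩ (Metric.mem_ball_self (hδpos w)))
  have hdisj : ∀ u ∈ F \ {x}, u ∈ G → u ∈ H → False := by
    intro u hu huG huH
    obtain ⟨w, hwV, hwb⟩ := Set.mem_iUnion₂.1 huG
    obtain ⟨w', hw'V, hw'b⟩ := Set.mem_iUnion₂.1 huH
    have h1 : u ∈ V := habsV w hwV u hu.1 (Metric.mem_ball.1 hwb)
    have h2 : u ∉ V := habsW w' hw'V u hu.1 (Metric.mem_ball.1 hw'b)
    exact h2 h1
  have hωFsub : phiW N ω '' F ⊆ F \ {x} := (hωE 0).trans (Ek_subset_diff hF _)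
  have hτFsub : phiW N τ '' F ⊆ F \ {x} := (hτE 0).trans (Ek_subset_diff hF _)
  have hmemG : ∀ y' ∈ phiW N ω '' F, y' ∈ G := by
    intro y' hy'
    exact Set.mem_biUnion (hωV hy') (Metric.mem_ball_self (hδpos y'))
  have hmemH : ∀ z' ∈ phiW N τ '' F, z' ∈ H := by
    intro z' hz'
    exact Set.mem_biUnion ⟨hτFsub hz', hτV z' hz'⟩ (Metric.mem_ball_self (hδpos z'))
  constructor
  · refine ⟨hωFsub, hτFsub, ?_⟩
    intro y' hy' z' hz' heq
    have hy'S : y' ∈ connectedComponentIn (F \ {x}) y' :=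
      mem_connectedComponentIn (hωFsub hy')
    have hz'S : z' ∈ connectedComponentIn (F \ {x}) y' := by
      rw [heq]
      exact mem_connectedComponentIn (hτFsub hz')
    have hS : IsPreconnected (connectedComponentIn (F \ {x}) y') :=
      isPreconnected_connectedComponentIn
    have hSsub : connectedComponentIn (F \ {x}) y' ⊆ F \ {x} :=
      connectedComponentIn_subset _ _
    obtain ⟨u, huS, huG, huH⟩ := hS G H hGopen hHopen (hSsub.trans hcover)
      ⟨y', hy'S, hmemG y' hy'⟩ ⟨z', hz'S, hmemH z' hz'⟩
    exact hdisj u (hSsub huS) huG huH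
  · intro hpre
    obtain ⟨u, huS, huG, huH⟩ := hpre G H hGopen hHopen hcover
      ⟨y0, hωFsub hy0, hmemG y0 hy0⟩ ⟨z0, hτFsub hz0, hmemH z0 hz0⟩
    exact hdisj u huS huG huH
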